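/- Let g : Σ₂* → Σ₂* be the morphism defined by g(0) = 0001011 and g(1) = 0010111. Then for every infinite word w' over Σ₂ = {0,1}, the infinite word w = g(w') has the property that if x is a subword of w with |x| ≥ 6, then x^R is not a subword of w; moreover, if w' is not periodic, then g(w') is not periodic. -/

import Mathlib

/-- `x` occurs as a contiguous block of consecutive letters of the infinite word `w`. -/
def IsFactor {α : Type*} (x : List α) (w : ℕ → α) : Prop :=
  ∃ i : ℕ, x = (List.range x.length).map fun j => w (i + j)

/-- The periodic infinite word `y^ω = yyy⋯`. -/
def powOmega {α : Type*} (y : List α) (h : y ≠ []) : ℕ → α :=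
  fun n => y[n % y.length]'(Nat.mod_lt n (List.length_pos_iff.mpr h))

/-- The morphism `g` with `g(0) = 0001011` and `g(1) = 0010111`. -/
def g : Fin 2 → List (Fin 2)
  | 0 => [0, 0, 0, 1, 0, 1, 1]
  | 1 => [0, 0, 1, 0, 1, 1, 1]

/-- The image `g(w')` of an infinite word `w'` under the (7-uniform) morphism `g`:
the `n`-th letter of `g(w'₀)g(w'₁)g(w'₂)⋯`. -/
def gOmega (w' : ℕ → Fin 2) : ℕ → Fin 2 :=
  fun n => (g (w' (n / 7))).getD (n % 7) 0

lemma core : ∀ (r r' : Fin 7) (a b a' b' : Fin 2),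
    ((g a ++ g b).drop r.val).take 6 ≠ ((((g a' ++ g b').drop r'.val).take 6).reverse) := by
  decide

lemma gO1 (w' : ℕ → Fin 2) (q m : ℕ) (h : m < 7) :
    gOmega w' (7 * q + m) = (g (w' q)).getD m 0 := by
  have h1 : (7 * q + m) / 7 = q := by omega
  have h2 : (7 * q + m) % 7 = m := by omega
  simp [gOmega, h1, h2]

lemma gO2 (w' : ℕ → Fin 2) (q m : ℕ) (h : 7 ≤ m) (h2 : m < 14) :
    gOmega w' (7 * q + m) = (g (w' (q + 1))).getD (m - 7) 0 := by
  have h1 : (7 * q + m) / 7 = q + 1 := by omega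
  have h3 : (7 * q + m) % 7 = m - 7 := by omega
  simp [gOmega, h1, h3]

lemma g_length (a : Fin 2) : (g a).length = 7 := by
  fin_cases a <;> rfl

lemma cat_length (w' : ℕ → Fin 2) (q : ℕ) :
    (g (w' q) ++ g (w' (q + 1))).length = 14 := by
  rw [List.length_append, g_length, g_length]

lemma gOmega_cat (w' : ℕ → Fin 2) (q m : ℕ) (h : m < 14) :
    gOmega w' (7 * q + m) =
      (g (w' q) ++ g (w' (q + 1)))[m]'(by rw [cat_length]; omega) := by
  rcases lt_or_ge m 7 with h7 | h7
  · rw [gO1 w' q m h7, List.getElem_append_left (by rw [g_length]; omega),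
      List.getD_eq_getElem _ _ (by rw [g_length]; omega)]
  · rw [gO2 w' q m h7 h, List.getElem_append_right (by rw [g_length]; omega),
      List.getD_eq_getElem _ _ (by rw [g_length]; omega)]
    simp [g_length]

lemma window (w' : ℕ → Fin 2) (i : ℕ) :
    (List.range 6).map (fun j => gOmega w' (i + j)) =
      ((g (w' (i / 7)) ++ g (w' (i / 7 + 1))).drop (i % 7)).take 6 := by
  obtain ⟨q, r, hr, rfl⟩ : ∃ q r, r < 7 ∧ i = 7 * q + r :=
    ⟨i / 7, i % 7, Nat.mod_lt _ (by norm_num), by omega⟩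
  have hq : (7 * q + r) / 7 = q := by omega
  have hr7 : (7 * q + r) % 7 = r := by omega
  rw [hq, hr7]
  apply List.ext_getElem
  · simp [g_length]; omega
  · intro j hj1 hj2
    have hj : j < 6 := by simpa using hj1
    simp only [List.getElem_map, List.getElem_range, List.getElem_take, List.getElem_drop]
    rw [Nat.add_assoc, gOmega_cat w' q (r + j) (by omega)]

lemma factor_take {α : Type*} {x : List α} {w : ℕ → α} (h : IsFactor x w) (n : ℕ)
    (hn : n ≤ x.length) : IsFactor (x.take n) w := by
  obtain ⟨i, hi⟩ := h
  refine ⟨i, ?_⟩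
  rw [List.length_take, Nat.min_eq_left hn]
  conv_lhs => rw [hi]
  rw [← List.map_take, List.take_range, Nat.min_eq_left hn]

lemma factor_drop {α : Type*} {x : List α} {w : ℕ → α} (h : IsFactor x w) (k : ℕ) :
    IsFactor (x.drop k) w := by
  obtain ⟨i, hi⟩ := h
  refine ⟨i + k, ?_⟩
  conv_lhs => rw [hi]
  apply List.ext_getElem
  · simp
  · intro m h1 h2
    simp only [List.getElem_drop, List.getElem_map, List.getElem_range]
    congr 1
    omega

lemma no_rev6 (w' : ℕ → Fin 2) (y : List (Fin 2)) (hl : y.length = 6)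
    (h1 : IsFactor y (gOmega w')) (h2 : IsFactor y.reverse (gOmega w')) : False := by
  obtain ⟨i, hi⟩ := h1
  obtain ⟨i', hi'⟩ := h2
  rw [hl] at hi
  rw [List.length_reverse, hl] at hi'
  have hy : y = (((g (w' (i / 7)) ++ g (w' (i / 7 + 1))).drop (i % 7)).take 6) := by
    rw [hi, window]
  have hyr : y.reverse =
      (((g (w' (i' / 7)) ++ g (w' (i' / 7 + 1))).drop (i' % 7)).take 6) := by
    rw [hi', window]
  have := core ⟨i % 7, Nat.mod_lt _ (by norm_num)⟩ ⟨i' % 7, Nat.mod_lt _ (by norm_num)⟩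
    (w' (i / 7)) (w' (i / 7 + 1)) (w' (i' / 7)) (w' (i' / 7 + 1))
  exact this (by rw [← hy, ← hyr, List.reverse_reverse])

lemma period_mod {α : Type*} (f : ℕ → α) (p : ℕ) (hp : 0 < p)
    (h : ∀ k, f (k + p) = f k) : ∀ n, f n = f (n % p) := by
  intro n
  induction n using Nat.strong_induction_on with
  | _ n ih =>
    rcases lt_or_ge n p with h1 | h1
    · rw [Nat.mod_eq_of_lt h1]
    · have hn : n = (n - p) + p := by omega
      rw [hn, h, Nat.add_mod_right]
      exact ih (n - p) (by omega)

/-- For every infinite binary word `w'`: if `x` is a subword of `g(w')` with `|x| ≥ 6`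
then `x^R` is not a subword of `g(w')`; moreover if `w'` is not periodic then
`g(w')` is not periodic. -/
theorem stmt_15 (w' : ℕ → Fin 2) :
    (∀ x : List (Fin 2), IsFactor x (gOmega w') → 6 ≤ x.length →
      ¬ IsFactor x.reverse (gOmega w')) ∧
    ((¬ ∃ (y : List (Fin 2)) (hy : y ≠ []), w' = powOmega y hy) →
      ¬ ∃ (y : List (Fin 2)) (hy : y ≠ []), gOmega w' = powOmega y hy) := by
  constructor
  · intro x hx h6 hxr
    have hy1 : IsFactor (x.take 6) (gOmega w') := factor_take hx 6 h6
    have hy2 : IsFactor ((x.take 6).reverse) (gOmega w') := by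
      rw [List.reverse_take]
      exact factor_drop hxr _
    exact no_rev6 w' (x.take 6) (by rw [List.length_take]; omega) hy1 hy2
  · rintro hnp ⟨y, hy, hgw⟩
    apply hnp
    have hp : 0 < y.length := List.length_pos_iff.mpr hy
    set p := y.length with hpdef
    -- gOmega w' has period 7*p
    have hper : ∀ n, gOmega w' (n + 7 * p) = gOmega w' n := by
      intro n
      rw [hgw]
      simp only [powOmega]
      congr 1
      have : n + 7 * p = n + p * 7 := by ring
      rw [this, Nat.add_mul_mod_self_left]
    -- w' has period p
    have hw : ∀ k, w' (k + p) = w' k := by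
      intro k
      have h2 : (g (w' (k + p))).getD 2 0 = (g (w' k)).getD 2 0 := by
        rw [← gO1 w' (k + p) 2 (by norm_num), ← gO1 w' k 2 (by norm_num)]
        have : 7 * (k + p) + 2 = 7 * k + 2 + 7 * p := by ring
        rw [this, hper]
      have : ∀ a b : Fin 2, (g a).getD 2 0 = (g b).getD 2 0 → a = b := by decide
      exact this _ _ h2
    have hne : (List.range p).map w' ≠ [] := by
      intro hcon
      have := congrArg List.length hcon
      simp at this
      omega
    refine ⟨(List.range p).map w', hne, ?_⟩
    funext n
    simp only [powOmega, List.getElem_map, List.getElem_range, List.length_map,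
      List.length_range]
    exact period_mod w' p hp hw n
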